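/- With the notation of the context, define G(v, k, l, l') := G_θ(v^{(𝟏)}) · Φ_{θ,ϑ}(v) · b^{(1)}_{θ,ϑ}(k|v) · b^{ref}_{θ,ϑ}(l|v) · b̃^{ref}_{ϑ,θ}(l'|v). Then for all v ∈ Z^{T·M} and all k, l, l' ∈ {1,…,M}^T one has G(s_{1,l}(v), 𝔯_l(k), l, 𝔯_l(l')) = G(v, k, l, l'). Consequently, the delayed-rejection refreshment move of the MHAAR-RB algorithm, which upon rejection replaces the latent variable v^{(𝟏)} by v^{(l)} with l drawn from b^{ref}_{θ,ϑ}(·|v), leaves the joint target distribution invariant. -/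

import Mathlib

/-!
The swap `s_{1,l}` only permutes each particle column, so every normalising sum is unchanged,
and `𝔯_l` is exactly the relabelling with `s_{1,l}(v)^{(𝔯_l(k))} = v^{(k)}`; hence the factors
`b^{(1)}` and `b̃^{ref}` are invariant. What remains is detailed balance of the refreshment,
`G_θ(v^{(l)}) Φ(s_{1,l} v) b^{ref}(𝟏|v) = G_θ(v^{(𝟏)}) Φ(v) b^{ref}(l|v)`: swapping particle `l`
into slot `1` trades the proposal factor `q(v^{(l)})` in `Φ` for `q(v^{(𝟏)})`, and both sides
become `G_θ(v^{(𝟏)}) G_θ(v^{(l)}) ∏_{t,i} q(v_t^{(i)}) / (q(v^{(𝟏)}) q(v^{(l)}) ∏_t ∑_i γ/q)`.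
-/

open MeasureTheory Finset

namespace MHAARRB10

variable {Z : Type*}

/-- The path `v^{(k)}` extracted from the particle array `v`. -/
def pathOf (n m : ℕ) (v : Fin (n + 1) → Fin (m + 1) → Z)
    (k : Fin (n + 1) → Fin (m + 1)) : Fin (n + 1) → Z := fun t => v t (k t)

/-- The constant index path `𝟏`. -/
def onePath (n m : ℕ) : Fin (n + 1) → Fin (m + 1) := fun _ => 0

/-- The swap operator `s_{1,l}`. -/
def swapArr (n m : ℕ) (l : Fin (n + 1) → Fin (m + 1))
    (v : Fin (n + 1) → Fin (m + 1) → Z) : Fin (n + 1) → Fin (m + 1) → Z :=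
  fun t i => v t (Equiv.swap 0 (l t) i)

/-- The index relabelling `𝔯_l(k)`. -/
def relabel (n m : ℕ) (l k : Fin (n + 1) → Fin (m + 1)) : Fin (n + 1) → Fin (m + 1) :=
  fun t => if k t = 0 then l t else if k t = l t then 0 else k t

/-- `G_θ(z) = ∏_t γ_{t,θ}(z_t)`. -/
noncomputable def G (n : ℕ) (γ : Fin (n + 1) → Z → ℝ) (z : Fin (n + 1) → Z) : ℝ :=
  ∏ t, γ t (z t)

/-- The proposal density `Φ_{θ,ϑ}(v) = ∏_t ∏_{i≥2} q_{t,θ,ϑ}(v_t^{(i)})`. -/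
noncomputable def Phi (n m : ℕ) (qp : Fin (n + 1) → Z → ℝ)
    (v : Fin (n + 1) → Fin (m + 1) → Z) : ℝ :=
  ∏ t, ∏ i ∈ univ.erase (0 : Fin (m + 1)), qp t (v t i)

/-- Selection probabilities of the form
`∏_t [γ_t(v_t^{(k_t)})/q_t(v_t^{(k_t)})] / [∑_i γ_t(v_t^{(i)})/q_t(v_t^{(i)})]`;
this gives `b^{(1)}_{θ,ϑ}` and `b̃^{ref}_{ϑ,θ}` for `γ = γ_ϑ`, and `b^{ref}_{θ,ϑ}`
for `γ = γ_θ` (all with `q = q_{θ,ϑ}`). -/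
noncomputable def bSel (n m : ℕ) (γ qp : Fin (n + 1) → Z → ℝ)
    (k : Fin (n + 1) → Fin (m + 1)) (v : Fin (n + 1) → Fin (m + 1) → Z) : ℝ :=
  ∏ t, (γ t (v t (k t)) / qp t (v t (k t))) / (∑ i, γ t (v t i) / qp t (v t i))

/-- The joint density
`G(v,k,l,l') = G_θ(v^{(𝟏)}) Φ_{θ,ϑ}(v) b^{(1)}_{θ,ϑ}(k|v) b^{ref}_{θ,ϑ}(l|v) b̃^{ref}_{ϑ,θ}(l'|v)`. -/
noncomputable def Gjoint (n m : ℕ) (γθ γϑ qp : Fin (n + 1) → Z → ℝ)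
    (v : Fin (n + 1) → Fin (m + 1) → Z) (k l l' : Fin (n + 1) → Fin (m + 1)) : ℝ :=
  G n γθ (pathOf n m v (onePath n m)) * Phi n m qp v *
    bSel n m γϑ qp k v * bSel n m γθ qp l v * bSel n m γϑ qp l' v

theorem prod_erase_swap_mul {α M : Type*} [Fintype α] [DecidableEq α] [CommMonoid M]
    (x a : α) (f : α → M) :
    f a * ∏ i ∈ univ.erase x, f (Equiv.swap x a i) = f x * ∏ i ∈ univ.erase x, f i := by
  have hswap := mul_prod_erase univ (fun i => f (Equiv.swap x a i)) (mem_univ x)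
  rw [Equiv.swap_apply_left, Equiv.prod_comp] at hswap
  rw [hswap, mul_prod_erase univ f (mem_univ x)]

section

variable {n m : ℕ}

theorem relabel_onePath (l : Fin (n + 1) → Fin (m + 1)) : relabel n m l (onePath n m) = l := by
  funext t
  simp [relabel, onePath]

theorem relabel_self (l : Fin (n + 1) → Fin (m + 1)) : relabel n m l l = onePath n m := by
  funext t
  by_cases h : l t = 0 <;> simp [relabel, onePath, h]

theorem swap_zero_relabel (l k : Fin (n + 1) → Fin (m + 1)) (t : Fin (n + 1)) :
    Equiv.swap 0 (l t) (relabel n m l k t) = k t := by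
  unfold relabel
  split_ifs with h0 hl
  · rw [Equiv.swap_apply_right, h0]
  · rw [Equiv.swap_apply_left, hl]
  · exact Equiv.swap_apply_of_ne_of_ne h0 hl

theorem pathOf_swapArr_relabel (l k : Fin (n + 1) → Fin (m + 1))
    (v : Fin (n + 1) → Fin (m + 1) → Z) :
    pathOf n m (swapArr n m l v) (relabel n m l k) = pathOf n m v k := by
  funext t
  simp only [pathOf, swapArr, swap_zero_relabel]

theorem bSel_swapArr_relabel (γ qp : Fin (n + 1) → Z → ℝ) (l k : Fin (n + 1) → Fin (m + 1))
    (v : Fin (n + 1) → Fin (m + 1) → Z) :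
    bSel n m γ qp (relabel n m l k) (swapArr n m l v) = bSel n m γ qp k v := by
  refine prod_congr rfl fun t _ => ?_
  have hpath := congrFun (pathOf_swapArr_relabel l k v) t
  simp only [pathOf] at hpath
  rw [hpath]
  congr 1
  exact Equiv.sum_comp (Equiv.swap 0 (l t)) fun i => γ t (v t i) / qp t (v t i)

theorem bSel_eq_div (γ qp : Fin (n + 1) → Z → ℝ) (k : Fin (n + 1) → Fin (m + 1))
    (v : Fin (n + 1) → Fin (m + 1) → Z) :
    bSel n m γ qp k v =
      G n γ (pathOf n m v k) / G n qp (pathOf n m v k) /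
        ∏ t, ∑ i, γ t (v t i) / qp t (v t i) := by
  simp only [bSel, G, pathOf, prod_div_distrib]

theorem Phi_swapArr_mul (qp : Fin (n + 1) → Z → ℝ) (l : Fin (n + 1) → Fin (m + 1))
    (v : Fin (n + 1) → Fin (m + 1) → Z) :
    Phi n m qp (swapArr n m l v) * G n qp (pathOf n m v l) =
      Phi n m qp v * G n qp (pathOf n m v (onePath n m)) := by
  simp only [Phi, G, pathOf, swapArr, onePath, ← prod_mul_distrib]
  refine prod_congr rfl fun t _ => ?_
  rw [mul_comm, prod_erase_swap_mul 0 (l t) fun i => qp t (v t i), mul_comm]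

theorem refresh_balance (γ qp : Fin (n + 1) → Z → ℝ) (hqp : ∀ t z, qp t z ≠ 0)
    (l : Fin (n + 1) → Fin (m + 1)) (v : Fin (n + 1) → Fin (m + 1) → Z) :
    G n γ (pathOf n m v l) * Phi n m qp (swapArr n m l v) * bSel n m γ qp (onePath n m) v =
      G n γ (pathOf n m v (onePath n m)) * Phi n m qp v * bSel n m γ qp l v := by
  have hG : ∀ k, G n qp (pathOf n m v k) ≠ 0 := fun k =>
    prod_ne_zero_iff.mpr fun t _ => hqp t _
  have hPhi : Phi n m qp (swapArr n m l v) =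
      Phi n m qp v * G n qp (pathOf n m v (onePath n m)) / G n qp (pathOf n m v l) :=
    eq_div_of_mul_eq (hG l) (Phi_swapArr_mul qp l v)
  rw [hPhi, bSel_eq_div, bSel_eq_div]
  field_simp [hG]

end

theorem delayed_rejection_invariance_general
    (n m : ℕ)
    (γθ γϑ qp : Fin (n + 1) → Z → ℝ)
    (hqp : ∀ t z, 0 < qp t z)
    (v : Fin (n + 1) → Fin (m + 1) → Z) (k l l' : Fin (n + 1) → Fin (m + 1)) :
    Gjoint n m γθ γϑ qp (swapArr n m l v) (relabel n m l k) l (relabel n m l l')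
      = Gjoint n m γθ γϑ qp v k l l' := by
  have hpath : pathOf n m (swapArr n m l v) (onePath n m) = pathOf n m v l := by
    rw [← relabel_self l, pathOf_swapArr_relabel]
  have hrefresh : bSel n m γθ qp l (swapArr n m l v) = bSel n m γθ qp (onePath n m) v := by
    simpa only [relabel_onePath] using bSel_swapArr_relabel γθ qp l (onePath n m) v
  have hbalance := refresh_balance γθ qp (fun t z => (hqp t z).ne') l v
  simp only [Gjoint, hpath, hrefresh, bSel_swapArr_relabel]
  linear_combination (bSel n m γϑ qp k v * bSel n m γϑ qp l' v) * hbalance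

/-- For all `v`, `k`, `l`, `l'`,
`G(s_{1,l}(v), 𝔯_l(k), l, 𝔯_l(l')) = G(v, k, l, l')`; consequently the
delayed-rejection refreshment move of the MHAAR-RB algorithm leaves the joint target
distribution invariant. -/
theorem delayed_rejection_invariance
    [MeasurableSpace Z] (n m : ℕ)
    (γθ γϑ qp qpb : Fin (n + 1) → Z → ℝ)
    (hγθm : ∀ t, Measurable (γθ t)) (hγϑm : ∀ t, Measurable (γϑ t))
    (hqpm : ∀ t, Measurable (qp t)) (hqpbm : ∀ t, Measurable (qpb t))
    (hγθ : ∀ t z, 0 < γθ t z) (hγϑ : ∀ t z, 0 < γϑ t z)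
    (hqp : ∀ t z, 0 < qp t z) (hqpb : ∀ t z, 0 < qpb t z)
    (v : Fin (n + 1) → Fin (m + 1) → Z) (k l l' : Fin (n + 1) → Fin (m + 1)) :
    Gjoint n m γθ γϑ qp (swapArr n m l v) (relabel n m l k) l (relabel n m l l')
      = Gjoint n m γθ γϑ qp v k l l' :=
  delayed_rejection_invariance_general n m γθ γϑ qp hqp v k l l'

end MHAARRB10
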